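/- Let D ⊆ E admit a d-flow and let e ∈ E. Then A(D ⊕ e) = A(D) or A(D ⊕ rev e) = A(D); that is, there exists e' ∈ {e, rev e} such that D ⊕ e' admits a d-flow and its unique min-cost d-flow coincides with A(D). -/

import Mathlib

/-!
A min-cost flow `f` on `D` never uses both `e` and `drev e`, since cancelling flow around that
2-cycle would make it cheaper; say `f (drev e) = 0`. Then `f` is a flow on `D ⊕ e`, and if
`e ∈ D` we are done because `D ⊕ e ⊆ D`. Otherwise `f` is also a flow on `D ⊕ drev e`. Flows `g`
on `D ⊕ e` and `g'` on `D ⊕ drev e` both cheaper than `f` would have to use `e` and `drev e`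
respectively; the convex combination of them carrying equal flow on `e` and on `drev e` then
cancels around the 2-cycle to a flow on `D` cheaper than `f`. So `f` is min-cost on `D ⊕ e` or on
`D ⊕ drev e`, and uniqueness of min-cost flows turns this into `A (D ⊕ e') = A D`.
-/

open Finset

section Defs

variable {V : Type*}

/-- Reversal of a directed edge. -/
def drev (e : V × V) : V × V := (e.2, e.1)

/-- `K` is a subgraph of the (symmetric) edge set `E`: it contains either both or
neither of `e` and `drev e` for every `e ∈ E`. -/
def IsSubgraph [DecidableEq V] (E K : Finset (V × V)) : Prop :=
  K ⊆ E ∧ ∀ e ∈ E, (e ∈ K ↔ drev e ∈ K)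

/-- `L` is an orientation of the (symmetric) edge set `E`: it contains exactly one of
`e` and `drev e` for every `e ∈ E`. -/
def IsOrientation [DecidableEq V] (E L : Finset (V × V)) : Prop :=
  L ⊆ E ∧ ∀ e ∈ E, (e ∈ L ↔ drev e ∉ L)

variable [Fintype V] [DecidableEq V]

/-- `f` is a `d`-flow on the directed subgraph `D` of the graph with edge set `E`. -/
def IsFlow (E D : Finset (V × V)) (d : V → ℤ) (f : V × V → ℝ) : Prop :=
  (∀ e ∈ E, 0 ≤ f e ∧ f e ≤ 1) ∧
  (∀ e, e ∉ D → f e = 0) ∧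
  ∀ u : V,
    ((Finset.univ.filter (fun v : V => (u, v) ∈ E)).sum fun v => f (u, v)) -
      ((Finset.univ.filter (fun v : V => (v, u) ∈ E)).sum fun v => f (v, u)) = (d u : ℝ)

/-- A `d`-flow exists on `D`. -/
def AdmitsFlow (E D : Finset (V × V)) (d : V → ℤ) : Prop :=
  ∃ f : V × V → ℝ, IsFlow E D d f

/-- The `w`-cost of a flow `f`. -/
def flowCost (E : Finset (V × V)) (w : V × V → ℝ) (f : V × V → ℝ) : ℝ :=
  ∑ e ∈ E, w e * f e

/-- `f` is a min-cost `d`-flow on `D`. -/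
def IsMinCostFlow (E D : Finset (V × V)) (d : V → ℤ) (w : V × V → ℝ)
    (f : V × V → ℝ) : Prop :=
  IsFlow E D d f ∧ ∀ g : V × V → ℝ, IsFlow E D d g → flowCost E w f ≤ flowCost E w g

/-- The `{0,1}`-valued function determined by a set of edges. -/
def ind (S : Finset (V × V)) : V × V → ℝ := fun e => if e ∈ S then 1 else 0

/-- `A` assigns to every flow-admitting `D ⊆ E` the (edge set of the) unique,
`{0,1}`-valued min-cost `d`-flow on `D`. -/
def GoodA (E : Finset (V × V)) (d : V → ℤ) (w : V × V → ℝ)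
    (A : Finset (V × V) → Finset (V × V)) : Prop :=
  ∀ D : Finset (V × V), D ⊆ E → AdmitsFlow E D d →
    IsMinCostFlow E D d w (ind (A D)) ∧
    ∀ f : V × V → ℝ, IsMinCostFlow E D d w f → f = ind (A D)

/-- `A(D) = A(D')`: both `D` and `D'` admit a `d`-flow and their unique min-cost
`d`-flows coincide.  (If one of them admits no `d`-flow this is false.) -/
def AEq (E : Finset (V × V)) (d : V → ℤ) (A : Finset (V × V) → Finset (V × V))
    (D D' : Finset (V × V)) : Prop :=
  AdmitsFlow E D d ∧ AdmitsFlow E D' d ∧ A D = A D'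

/-- `D ⊕ e := (D ∪ {e}) \ {drev e}`. -/
def oplus (D : Finset (V × V)) (e : V × V) : Finset (V × V) := insert e D \ {drev e}

/-- `D + e := D ∪ {e, drev e}`. -/
def padd (D : Finset (V × V)) (e : V × V) : Finset (V × V) := D ∪ {e, drev e}

/-- `D − e := D \ {e, drev e}`. -/
def psub (D : Finset (V × V)) (e : V × V) : Finset (V × V) := D \ {e, drev e}

/-- The representative of `{e, drev e}` lying in the reference orientation `E'`. -/
def chi (E' : Finset (V × V)) (e : V × V) : V × V := if e ∈ E' then e else drev e

/-- The map `φ_e`. -/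
noncomputable def phiE (E : Finset (V × V)) (d : V → ℤ)
    (A : Finset (V × V) → Finset (V × V)) (E' : Finset (V × V))
    (e : V × V) (D : Finset (V × V)) : Finset (V × V) := by
  classical
  exact
    if ¬ AEq E d A D (oplus D e) then oplus D (drev e)
    else if ¬ AEq E d A D (oplus D (drev e)) then oplus D e
    else if e ∈ D then oplus D (chi E' e) else oplus D (drev (chi E' e))

/-- The map `ψ_e`. -/
noncomputable def psiE (E : Finset (V × V)) (d : V → ℤ)
    (A : Finset (V × V) → Finset (V × V)) (E' : Finset (V × V))
    (e : V × V) (D : Finset (V × V)) : Finset (V × V) := by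
  classical
  exact
    if ¬ AEq E d A D (padd D e) then psub D e
    else if ¬ AEq E d A D (psub D e) then padd D e
    else if chi E' e ∈ D then padd D e else psub D e

end Defs


section MinCostFlow

variable {V : Type*} {E D S S' : Finset (V × V)} {d : V → ℤ} {w f g g' : V × V → ℝ}
  {e : V × V}

@[simp]
lemma drev_drev (x : V × V) : drev (drev x) = x := rfl

@[simp]
lemma drev_mk (a b : V) : drev (a, b) = (b, a) := rfl

lemma drev_eq_iff {x y : V × V} : drev x = y ↔ x = drev y := by
  constructor <;> rintro rfl <;> rfl

lemma flowCost_add : flowCost E w (f + g) = flowCost E w f + flowCost E w g := by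
  simp only [flowCost, Pi.add_apply, mul_add, sum_add_distrib]

lemma flowCost_sub : flowCost E w (f - g) = flowCost E w f - flowCost E w g := by
  simp only [flowCost, Pi.sub_apply, mul_sub, sum_sub_distrib]

lemma flowCost_smul (c : ℝ) : flowCost E w (c • f) = c * flowCost E w f := by
  simp only [flowCost, Pi.smul_apply, smul_eq_mul, mul_sum]
  exact sum_congr rfl fun _ _ => by ring

variable [DecidableEq V]

lemma mem_oplus {x : V × V} : x ∈ oplus D e ↔ (x = e ∨ x ∈ D) ∧ x ≠ drev e := by
  simp [oplus]

lemma oplus_subset (hD : D ⊆ E) (he : e ∈ E) : oplus D e ⊆ E := by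
  intro x hx
  rcases (mem_oplus.1 hx).1 with rfl | hxD
  exacts [he, hD hxD]

lemma ind_injective : Function.Injective (ind : Finset (V × V) → V × V → ℝ) := by
  intro S T h
  ext x
  have := congrFun h x
  by_cases hS : x ∈ S <;> by_cases hT : x ∈ T <;> simp_all [ind]

lemma ind_pair_drev (e x : V × V) : ind {e, drev e} (drev x) = ind {e, drev e} x := by
  simp only [ind, mem_insert, mem_singleton, drev_eq_iff, drev_drev]
  congr 1
  exact propext or_comm

lemma flowCost_ind (hS : S ⊆ E) : flowCost E w (ind S) = ∑ x ∈ S, w x := by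
  simp only [flowCost, ind, mul_ite, mul_one, mul_zero]
  rw [sum_ite_mem, inter_eq_right.2 hS]

lemma flowCost_sub_smul_ind_pair_lt {t : ℝ} (hE : ∀ x, x ∈ E ↔ drev x ∈ E)
    (hw : ∀ x ∈ E, 0 < w x) (he : e ∈ E) (ht : 0 < t) :
    flowCost E w (f - t • ind {e, drev e}) < flowCost E w f := by
  have hsub : ({e, drev e} : Finset _) ⊆ E := by
    simpa [insert_subset_iff] using ⟨he, (hE e).1 he⟩
  have hpos : 0 < ∑ x ∈ ({e, drev e} : Finset _), w x :=
    sum_pos (fun x hx => hw x (hsub hx)) (insert_nonempty _ _)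
  rw [flowCost_sub, flowCost_smul, flowCost_ind hsub]
  nlinarith

variable [Fintype V]

def netOutflow (E : Finset (V × V)) (f : V × V → ℝ) (u : V) : ℝ :=
  (∑ v ∈ univ.filter (fun v => (u, v) ∈ E), f (u, v)) -
    ∑ v ∈ univ.filter (fun v => (v, u) ∈ E), f (v, u)

lemma IsFlow.netOutflow_eq (hf : IsFlow E S d f) (u : V) : netOutflow E f u = d u :=
  hf.2.2 u

lemma netOutflow_add (u : V) :
    netOutflow E (f + g) u = netOutflow E f u + netOutflow E g u := by
  simp only [netOutflow, Pi.add_apply, sum_add_distrib]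
  ring

lemma netOutflow_sub (u : V) :
    netOutflow E (f - g) u = netOutflow E f u - netOutflow E g u := by
  simp only [netOutflow, Pi.sub_apply, sum_sub_distrib]
  ring

lemma netOutflow_smul (c : ℝ) (u : V) : netOutflow E (c • f) u = c * netOutflow E f u := by
  simp only [netOutflow, Pi.smul_apply, smul_eq_mul, ← mul_sum]
  ring

lemma netOutflow_eq_zero_of_drev_invariant (hE : ∀ x, x ∈ E ↔ drev x ∈ E)
    (hf : ∀ x, f (drev x) = f x) (u : V) : netOutflow E f u = 0 := by
  rw [netOutflow, sub_eq_zero]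
  exact sum_congr (by ext v; simpa using hE (u, v)) fun v _ => (hf (u, v)).symm

lemma IsFlow.mono_of_eq_zero (hf : IsFlow E S d f) (h : ∀ x ∈ S, x ∉ S' → f x = 0) :
    IsFlow E S' d f := by
  refine ⟨hf.1, fun x hx => ?_, hf.2.2⟩
  by_cases hxS : x ∈ S
  exacts [h x hxS hx, hf.2.1 x hxS]

lemma IsFlow.convexComb {l : ℝ} (hg : IsFlow E S d g) (hg' : IsFlow E S' d g')
    (hl0 : 0 ≤ l) (hl1 : l ≤ 1) : IsFlow E (S ∪ S') d (l • g + (1 - l) • g') := by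
  refine ⟨fun x hx => ?_, fun x hx => ?_, fun u => ?_⟩
  · obtain ⟨h0, h1⟩ := hg.1 x hx
    obtain ⟨h0', h1'⟩ := hg'.1 x hx
    simp only [Pi.add_apply, Pi.smul_apply, smul_eq_mul]
    constructor <;> nlinarith
  · rw [mem_union, not_or] at hx
    simp [hg.2.1 x hx.1, hg'.2.1 x hx.2]
  · change netOutflow E _ u = d u
    rw [netOutflow_add, netOutflow_smul, netOutflow_smul, hg.netOutflow_eq, hg'.netOutflow_eq]
    ring

lemma IsFlow.sub_smul_ind_pair {t : ℝ} (hE : ∀ x, x ∈ E ↔ drev x ∈ E) (hf : IsFlow E S d f)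
    (ht : 0 ≤ t) (hte : t ≤ f e) (htr : t ≤ f (drev e)) :
    IsFlow E S d (f - t • ind {e, drev e}) := by
  have hle : ∀ x ∈ ({e, drev e} : Finset _), t ≤ f x := by simpa using ⟨hte, htr⟩
  refine ⟨fun x hx => ?_, fun x hx => ?_, fun u => ?_⟩
  · obtain ⟨h0, h1⟩ := hf.1 x hx
    by_cases hxc : x ∈ ({e, drev e} : Finset _)
    · have hxt := hle x hxc
      simp only [Pi.sub_apply, Pi.smul_apply, smul_eq_mul, ind, if_pos hxc]
      constructor <;> linarith
    · simpa [ind, hxc] using ⟨h0, h1⟩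
  · have h0 := hf.2.1 x hx
    by_cases hxc : x ∈ ({e, drev e} : Finset _)
    · have hxt := hle x hxc
      simp [h0, le_antisymm (h0 ▸ hxt) ht]
    · simp [ind, hxc, h0]
  · change netOutflow E _ u = d u
    rw [netOutflow_sub, netOutflow_smul, hf.netOutflow_eq,
      netOutflow_eq_zero_of_drev_invariant hE (ind_pair_drev e) u]
    ring

lemma IsFlow.oplus (hf : IsFlow E S d f) (hfr : f (drev e) = 0) : IsFlow E (oplus S e) d f :=
  hf.mono_of_eq_zero fun x hxS hx => by
    obtain rfl : x = drev e := by
      by_contra h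
      exact hx (mem_oplus.2 ⟨Or.inr hxS, h⟩)
    exact hfr

lemma IsMinCostFlow.of_subset (hf : IsMinCostFlow E S d w f) (hS : S' ⊆ S)
    (hf' : IsFlow E S' d f) : IsMinCostFlow E S' d w f :=
  ⟨hf', fun g hg => hf.2 g (hg.mono_of_eq_zero fun x _ hx => hg.2.1 x fun hxS' => hx (hS hxS'))⟩

lemma IsMinCostFlow.apply_eq_zero_or_apply_drev_eq_zero (hE : ∀ x, x ∈ E ↔ drev x ∈ E)
    (hw : ∀ x ∈ E, 0 < w x) (he : e ∈ E) (hf : IsMinCostFlow E D d w f) :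
    f e = 0 ∨ f (drev e) = 0 := by
  by_contra! h
  have ht : 0 < min (f e) (f (drev e)) :=
    lt_min ((hf.1.1 e he).1.lt_of_ne' h.1) ((hf.1.1 _ ((hE e).1 he)).1.lt_of_ne' h.2)
  have hcancel := hf.1.sub_smul_ind_pair hE ht.le (min_le_left _ _) (min_le_right _ _)
  exact (hf.2 _ hcancel).not_gt (flowCost_sub_smul_ind_pair_lt hE hw he ht)

lemma IsMinCostFlow.apply_pos_of_cheaper_on_oplus (he : e ∈ E) (hf : IsMinCostFlow E D d w f)
    (hg : IsFlow E (oplus D e) d g) (hgf : flowCost E w g < flowCost E w f) : 0 < g e := by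
  refine (hg.1 e he).1.lt_of_ne' fun hge => ?_
  have hgD : IsFlow E D d g := hg.mono_of_eq_zero fun x hx hxD => by
    obtain rfl : x = e := (mem_oplus.1 hx).1.resolve_right hxD
    exact hge
  exact (hf.2 g hgD).not_gt hgf

lemma IsMinCostFlow.not_cheaper_on_oplus_and_oplus_drev (hE : ∀ x, x ∈ E ↔ drev x ∈ E)
    (hw : ∀ x ∈ E, 0 < w x) (he : e ∈ E) (hf : IsMinCostFlow E D d w f)
    (hg : IsFlow E (oplus D e) d g) (hg' : IsFlow E (oplus D (drev e)) d g')
    (hgf : flowCost E w g < flowCost E w f) (hg'f : flowCost E w g' < flowCost E w f) :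
    False := by
  have hge : 0 < g e := hf.apply_pos_of_cheaper_on_oplus he hg hgf
  have hg'r : 0 < g' (drev e) := hf.apply_pos_of_cheaper_on_oplus ((hE e).1 he) hg' hg'f
  have hgr : g (drev e) = 0 := hg.2.1 _ fun hmem => (mem_oplus.1 hmem).2 rfl
  have hg'e : g' e = 0 := hg'.2.1 _ fun hmem => (mem_oplus.1 hmem).2 rfl
  -- `l` is chosen so that the combination `h` carries the same flow `t` on `e` and on `drev e`
  set l := g' (drev e) / (g e + g' (drev e))
  set t := g e * g' (drev e) / (g e + g' (drev e))
  have hl0 : 0 < l := by positivity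
  have hl1 : l < 1 := (div_lt_one (by positivity)).2 (by linarith)
  have ht : 0 < t := by positivity
  set h := l • g + (1 - l) • g' with hh
  have hhe : h e = t := by simp [h, l, t, hg'e]; ring
  have hhr : h (drev e) = t := by simp [h, l, t, hgr]; field_simp; ring
  clear_value h
  have hcomb : IsFlow E (oplus D e ∪ oplus D (drev e)) d h :=
    hh ▸ hg.convexComb hg' hl0.le hl1.le
  have hflow : IsFlow E D d (h - t • ind {e, drev e}) :=
    (hcomb.sub_smul_ind_pair hE ht.le hhe.ge hhr.ge).mono_of_eq_zero fun x hx hxD => by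
      have hxe : x = e ∨ x = drev e := by
        simp only [mem_union, mem_oplus] at hx
        tauto
      obtain rfl | rfl := hxe <;> simp [ind, hhe, hhr]
  have hcost : flowCost E w h < flowCost E w f := by
    rw [hh, flowCost_add, flowCost_smul, flowCost_smul]
    nlinarith
  exact (hf.2 _ hflow).not_gt ((flowCost_sub_smul_ind_pair_lt hE hw he ht).trans hcost)

lemma IsMinCostFlow.oplus_or_oplus_drev_of_isFlow (hE : ∀ x, x ∈ E ↔ drev x ∈ E)
    (hw : ∀ x ∈ E, 0 < w x) (he : e ∈ E) (hf : IsMinCostFlow E D d w f)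
    (hfe : IsFlow E (oplus D e) d f) (hfr : IsFlow E (oplus D (drev e)) d f) :
    IsMinCostFlow E (oplus D e) d w f ∨ IsMinCostFlow E (oplus D (drev e)) d w f := by
  by_contra! h
  simp only [IsMinCostFlow, hfe, hfr, true_and, not_forall, not_le] at h
  obtain ⟨⟨g, hg, hgf⟩, ⟨g', hg', hg'f⟩⟩ := h
  exact hf.not_cheaper_on_oplus_and_oplus_drev hE hw he hg hg' hgf hg'f

theorem IsMinCostFlow.oplus_or_oplus_drev (hE : ∀ x, x ∈ E ↔ drev x ∈ E)
    (hw : ∀ x ∈ E, 0 < w x) (he : e ∈ E) (hf : IsMinCostFlow E D d w f) :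
    IsMinCostFlow E (oplus D e) d w f ∨ IsMinCostFlow E (oplus D (drev e)) d w f := by
  wlog hfr : f (drev e) = 0 generalizing e
  · have hfe : f (drev (drev e)) = 0 :=
      (hf.apply_eq_zero_or_apply_drev_eq_zero hE hw he).resolve_right hfr
    simpa [or_comm] using this ((hE e).1 he) hfe
  by_cases heD : e ∈ D
  · have hsub : oplus D e ⊆ D := fun x hx => (mem_oplus.1 hx).1.elim (· ▸ heD) id
    exact Or.inl (hf.of_subset hsub (hf.1.oplus hfr))
  · exact hf.oplus_or_oplus_drev_of_isFlow hE hw he (hf.1.oplus hfr)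
      (hf.1.oplus (by simpa using hf.1.2.1 e heD))

lemma GoodA.aEq_of_isMinCostFlow {D' : Finset (V × V)} {A : Finset (V × V) → Finset (V × V)}
    (hA : GoodA E d w A) (hD' : D' ⊆ E) (hDf : AdmitsFlow E D d)
    (h : IsMinCostFlow E D' d w (ind (A D))) : AEq E d A D' D :=
  have hD'f : AdmitsFlow E D' d := ⟨_, h.1⟩
  ⟨hD'f, hDf, ind_injective ((hA D' hD' hD'f).2 _ h).symm⟩

end MinCostFlow

theorem minCostFlow_oplus_or_oplus_rev_general
    {V : Type*} [Fintype V] [DecidableEq V]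
    (E : Finset (V × V)) (hE_symm : ∀ e, e ∈ E ↔ drev e ∈ E)
    (d : V → ℤ)
    (w : V × V → ℝ) (hw : ∀ e ∈ E, 0 < w e)
    (A : Finset (V × V) → Finset (V × V)) (hA : GoodA E d w A)
    (D : Finset (V × V)) (hD : D ⊆ E) (hDf : AdmitsFlow E D d)
    (e : V × V) (he : e ∈ E) :
    AEq E d A (oplus D e) D ∨ AEq E d A (oplus D (drev e)) D := by
  have hmin := (hA D hD hDf).1
  rcases hmin.oplus_or_oplus_drev hE_symm hw he with h | h
  · exact Or.inl (hA.aEq_of_isMinCostFlow (oplus_subset hD he) hDf h)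
  · exact Or.inr (hA.aEq_of_isMinCostFlow (oplus_subset hD ((hE_symm e).1 he)) hDf h)

theorem minCostFlow_oplus_or_oplus_rev
    {V : Type*} [Fintype V] [DecidableEq V]
    (E : Finset (V × V)) (hE_symm : ∀ e, e ∈ E ↔ drev e ∈ E)
    (hE_ne : ∀ e ∈ E, e.1 ≠ e.2)
    (d : V → ℤ) (hd : ∑ u : V, d u = 0)
    (w : V × V → ℝ) (hw : ∀ e ∈ E, 0 < w e)
    (A : Finset (V × V) → Finset (V × V)) (hA : GoodA E d w A)
    (D : Finset (V × V)) (hD : D ⊆ E) (hDf : AdmitsFlow E D d)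
    (e : V × V) (he : e ∈ E) :
    AEq E d A (oplus D e) D ∨ AEq E d A (oplus D (drev e)) D :=
  minCostFlow_oplus_or_oplus_rev_general E hE_symm d w hw A hA D hD hDf e he
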